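/- arXiv:0802.3930 — 4 statements merged into one kernel-verified Lean document; each statement's English description precedes it below -/
import Mathlib

section
/- Let f ∈ Diff₀[0,1] with f continuously differentiable, let φ(x) = f(x) − x, and set m = min_{[0,1]} φ' and M = max_{[0,1]} φ' (note m > −1 since f' > 0). If x ∈ [0,1] satisfies φ(x) > 0, then for every y ∈ [x, f(x)] one has φ(y) > 0 and 1/(1+M) ≤ φ(x)/φ(y) ≤ 1/(1+m). -/
/- By the mean value inequality, `m (y - x) ≤ φ y - φ x ≤ M (y - x)` for `x ≤ y`. Since `φ`
vanishes at both endpoints, `m ≤ 0 ≤ M`, and for `y ∈ [x, f x]` the increment `y - x` is at most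
`φ x`; together these give `(1 + m) φ x ≤ φ y ≤ (1 + M) φ x`. -/

open Set Filter

/-- The sup norm over `[0,1]` of the derivative (within `[0,1]`) of a map. -/
noncomputable def supAbsDeriv (f : ℝ → ℝ) : ℝ :=
  sSup ((fun x => |derivWithin f (Set.Icc (0:ℝ) 1) x|) '' Set.Icc (0:ℝ) 1)

/-- `IsDiff01 f g` says that `f` is a `C¹` diffeomorphism of `[0,1]` fixing `0` and `1`,
with everywhere positive derivative, and `g` is its inverse. -/
structure IsDiff01 (f g : ℝ → ℝ) : Prop where
  mapsTo : Set.MapsTo f (Set.Icc (0:ℝ) 1) (Set.Icc (0:ℝ) 1)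
  inv_mapsTo : Set.MapsTo g (Set.Icc (0:ℝ) 1) (Set.Icc (0:ℝ) 1)
  left_inv : ∀ x ∈ Set.Icc (0:ℝ) 1, g (f x) = x
  right_inv : ∀ x ∈ Set.Icc (0:ℝ) 1, f (g x) = x
  map_zero : f 0 = 0
  map_one : f 1 = 1
  contDiffOn : ContDiffOn ℝ 1 f (Set.Icc (0:ℝ) 1)
  inv_contDiffOn : ContDiffOn ℝ 1 g (Set.Icc (0:ℝ) 1)
  deriv_pos : ∀ x ∈ Set.Icc (0:ℝ) 1, 0 < derivWithin f (Set.Icc (0:ℝ) 1) x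

/-- The growth sequence `Γ_n(f) = max (‖(fⁿ)'‖_∞, ‖(f⁻ⁿ)'‖_∞)`, where `g = f⁻¹`. -/
noncomputable def Gamma (f g : ℝ → ℝ) (n : ℕ) : ℝ :=
  max (supAbsDeriv (f^[n])) (supAbsDeriv (g^[n]))

/-- `γ(f) = lim_n Γ_n(f)^(1/n) = 1`, where `g = f⁻¹`. -/
def GammaEqOne (f g : ℝ → ℝ) : Prop :=
  Filter.Tendsto (fun n : ℕ => (Gamma f g n) ^ (1/(n:ℝ))) Filter.atTop (nhds 1)

/-- A modulus of continuity: continuous, non-decreasing, nonnegative on `[0,1]`,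
vanishing at `0`, and subadditive. -/
structure IsModCont (ω : ℝ → ℝ) : Prop where
  continuousOn : ContinuousOn ω (Set.Icc (0:ℝ) 1)
  monotoneOn : MonotoneOn ω (Set.Icc (0:ℝ) 1)
  nonneg : ∀ x ∈ Set.Icc (0:ℝ) 1, 0 ≤ ω x
  map_zero : ω 0 = 0
  subadd : ∀ a b : ℝ, 0 ≤ a → 0 ≤ b → a + b ≤ 1 → ω (a + b) ≤ ω a + ω b

/-- Membership in `Diff₀^ω[0,1]`: the derivative of `f` has modulus of continuity
controlled by `ω` up to a multiplicative constant. -/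
def InDiffOmega (ω f : ℝ → ℝ) : Prop :=
  ∃ C > 0, ∀ x ∈ Set.Icc (0:ℝ) 1, ∀ y ∈ Set.Icc (0:ℝ) 1,
    |derivWithin f (Set.Icc (0:ℝ) 1) x - derivWithin f (Set.Icc (0:ℝ) 1) y| ≤ C * ω |x - y|

theorem Convex.mul_sub_le_image_sub_of_le_derivWithin {s : Set ℝ} (hs : Convex ℝ s)
    {f : ℝ → ℝ} (hf : DifferentiableOn ℝ f s) {C : ℝ} (hC : ∀ x ∈ s, C ≤ derivWithin f s x) :
    ∀ x ∈ s, ∀ y ∈ s, x ≤ y → C * (y - x) ≤ f y - f x :=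
  hs.mul_sub_le_image_sub_of_le_deriv hf.continuousOn (hf.mono interior_subset) fun x hx => by
    rw [← derivWithin_of_mem_nhds (mem_interior_iff_mem_nhds.mp hx)]
    exact hC x (interior_subset hx)

theorem Convex.image_sub_le_mul_sub_of_derivWithin_le {s : Set ℝ} (hs : Convex ℝ s)
    {f : ℝ → ℝ} (hf : DifferentiableOn ℝ f s) {C : ℝ} (hC : ∀ x ∈ s, derivWithin f s x ≤ C) :
    ∀ x ∈ s, ∀ y ∈ s, x ≤ y → f y - f x ≤ C * (y - x) :=
  hs.image_sub_le_mul_sub_of_deriv_le hf.continuousOn (hf.mono interior_subset) fun x hx => by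
    rw [← derivWithin_of_mem_nhds (mem_interior_iff_mem_nhds.mp hx)]
    exact hC x (interior_subset hx)

theorem one_add_mul_le_of_mul_le_sub {a b c d : ℝ} (hc : c ≤ 0) (hd : d ≤ a)
    (h : c * d ≤ b - a) : (1 + c) * a ≤ b := by
  nlinarith

theorem le_one_add_mul_of_sub_le_mul {a b c d : ℝ} (hc : 0 ≤ c) (hd : d ≤ a)
    (h : b - a ≤ c * d) : b ≤ (1 + c) * a := by
  nlinarith

/-- **Claim 1(a).** For `f ∈ Diff₀[0,1]` with displacement `φ(x) = f(x) - x`, minimum `m`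
and maximum `M` of `φ'` on `[0,1]` (with `m > -1`): if `φ(x) > 0` then for all
`y ∈ [x, f(x)]` one has `φ(y) > 0` and `1/(1+M) ≤ φ(x)/φ(y) ≤ 1/(1+m)`. -/
theorem displacement_ratio_bound (f g : ℝ → ℝ) (hf : IsDiff01 f g)
    (m M : ℝ)
    (hm : IsLeast
      ((fun x => derivWithin (fun y => f y - y) (Set.Icc (0:ℝ) 1) x) '' Set.Icc (0:ℝ) 1) m)
    (hM : IsGreatest
      ((fun x => derivWithin (fun y => f y - y) (Set.Icc (0:ℝ) 1) x) '' Set.Icc (0:ℝ) 1) M)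
    (hm1 : -1 < m)
    (x : ℝ) (hx : x ∈ Set.Icc (0:ℝ) 1) (hφx : 0 < f x - x) :
    ∀ y ∈ Set.Icc x (f x),
      0 < f y - y ∧
      1 / (1 + M) ≤ (f x - x) / (f y - y) ∧
      (f x - x) / (f y - y) ≤ 1 / (1 + m) := by
  have hφ : DifferentiableOn ℝ (fun y => f y - y) (Icc 0 1) :=
    (hf.contDiffOn.differentiableOn one_ne_zero).sub differentiableOn_id
  have lower := (convex_Icc 0 1).mul_sub_le_image_sub_of_le_derivWithin hφ
    fun t ht => hm.2 ⟨t, ht, rfl⟩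
  have upper := (convex_Icc 0 1).image_sub_le_mul_sub_of_derivWithin_le hφ
    fun t ht => hM.2 ⟨t, ht, rfl⟩
  have h01 : (0:ℝ) ∈ Icc 0 1 ∧ (1:ℝ) ∈ Icc 0 1 :=
    ⟨left_mem_Icc.2 zero_le_one, right_mem_Icc.2 zero_le_one⟩
  have hm0 : m ≤ 0 := by
    simpa [hf.map_zero, hf.map_one] using lower 0 h01.1 1 h01.2 zero_le_one
  have hM0 : 0 ≤ M := by
    simpa [hf.map_zero, hf.map_one] using upper 0 h01.1 1 h01.2 zero_le_one
  intro y ⟨hxy, hyfx⟩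
  have hy : y ∈ Icc (0:ℝ) 1 := ⟨hx.1.trans hxy, hyfx.trans (hf.mapsTo hx).2⟩
  have hyx : y - x ≤ f x - x := by linarith
  have hlow := one_add_mul_le_of_mul_le_sub hm0 hyx (lower x hx y hy hxy)
  have hhigh := le_one_add_mul_of_sub_le_mul hM0 hyx (upper x hx y hy hxy)
  have hφy : 0 < f y - y := (mul_pos (by linarith) hφx).trans_le hlow
  refine ⟨hφy, ?_, ?_⟩
  · rw [div_le_div_iff₀ (by linarith) hφy]; linarith
  · rw [div_le_div_iff₀ hφy (by linarith)]; linarith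
end

section
/- Let ω : [0,1] → [0,∞) be a concave modulus of continuity which is strictly positive on (0,1], let ε ∈ (0,1] with ω(ε) < 1, and let Ω : [0, ε·ω(ε)] → [0,ε] be the inverse of the map x ↦ x·ω(x). Let φ : [0,ε] → ℝ be a C¹ function with φ ≥ 0 on [0,ε] and |φ'(u) − φ'(v)| ≤ ω(|u−v|) for all u,v ∈ [0,ε]. Suppose x ∈ (0,ε) satisfies φ(x) > 0, φ(x) ≤ ε·ω(ε), and I_x := [x − Ω(φ(x)), x + Ω(φ(x))] ⊆ [0,ε]. Then (a) |φ'(y)| ≤ 3·ω(Ω(φ(x))) = 3·φ(x)/Ω(φ(x)) for every y ∈ I_x, and (b) φ(y) ≤ 4·φ(x) for every y ∈ I_x. -/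
/-
On `I = [x - r, x + r]` with `r = Ω(φ(x))`, i.e. `r·ω(r) = φ(x)`, the derivative of `φ` oscillates
by at most `ω(r)`. Comparing `φ` with its tangent line at `x` and using `φ ≥ 0` at the two endpoints
of `I` gives `|φ'(x)| ≤ φ(x)/r + ω(r) = 2ω(r)`, hence `|φ'| ≤ 3ω(r)` on `I`, and the mean value
inequality then gives `φ ≤ φ(x) + r·3ω(r) = 4φ(x)` on `I`.
-/

open Set Filter

theorem Convex.abs_image_sub_sub_mul_le {s : Set ℝ} (hs : Convex ℝ s) {φ φ' : ℝ → ℝ} {a M : ℝ}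
    (hφ : ∀ u ∈ s, HasDerivWithinAt φ (φ' u) s u) (hM : ∀ u ∈ s, |φ' u - a| ≤ M)
    {x y : ℝ} (hx : x ∈ s) (hy : y ∈ s) :
    |φ y - φ x - a * (y - x)| ≤ M * |y - x| := by
  have hg : ∀ u ∈ s, HasDerivWithinAt (fun v => φ v - a * v) (φ' u - a) s u := fun u hu =>
    ((hφ u hu).sub ((hasDerivWithinAt_id u s).const_mul a)).congr_deriv (by rw [mul_one])
  have := hs.norm_image_sub_le_of_norm_hasDerivWithin_le hg hM hx hy
  simp only [Real.norm_eq_abs] at this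
  convert this using 2
  ring

section NonnegOnInterval

variable {φ φ' : ℝ → ℝ} {x r M : ℝ}

theorem abs_deriv_center_le_of_nonneg_endpoints (hr : 0 < r)
    (hφ : ∀ u ∈ Icc (x - r) (x + r), HasDerivWithinAt φ (φ' u) (Icc (x - r) (x + r)) u)
    (hM : ∀ u ∈ Icc (x - r) (x + r), |φ' u - φ' x| ≤ M)
    (hleft : 0 ≤ φ (x - r)) (hright : 0 ≤ φ (x + r)) :
    |φ' x| ≤ φ x / r + M := by
  have hxI : x ∈ Icc (x - r) (x + r) := ⟨by linarith, by linarith⟩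
  have key : ∀ y ∈ Icc (x - r) (x + r), |φ y - φ x - φ' x * (y - x)| ≤ M * |y - x| :=
    fun y hy => (convex_Icc _ _).abs_image_sub_sub_mul_le hφ hM hxI hy
  have hplus := le_of_abs_le (key (x + r) ⟨by linarith, le_rfl⟩)
  have hminus := le_of_abs_le (key (x - r) ⟨le_rfl, by linarith⟩)
  rw [show x + r - x = r by ring, abs_of_pos hr] at hplus
  rw [show x - r - x = -r by ring, abs_neg, abs_of_pos hr] at hminus
  rw [div_add' _ _ _ hr.ne', le_div_iff₀ hr]
  cases abs_cases (φ' x) <;> nlinarith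

theorem abs_deriv_le_of_nonneg_endpoints (hr : 0 < r)
    (hφ : ∀ u ∈ Icc (x - r) (x + r), HasDerivWithinAt φ (φ' u) (Icc (x - r) (x + r)) u)
    (hM : ∀ u ∈ Icc (x - r) (x + r), |φ' u - φ' x| ≤ M)
    (hleft : 0 ≤ φ (x - r)) (hright : 0 ≤ φ (x + r)) :
    ∀ y ∈ Icc (x - r) (x + r), |φ' y| ≤ φ x / r + 2 * M := fun y hy =>
  calc |φ' y| = |(φ' y - φ' x) + φ' x| := by rw [sub_add_cancel]
    _ ≤ |φ' y - φ' x| + |φ' x| := abs_add_le _ _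
    _ ≤ M + (φ x / r + M) :=
      add_le_add (hM y hy) (abs_deriv_center_le_of_nonneg_endpoints hr hφ hM hleft hright)
    _ = φ x / r + 2 * M := by ring

theorem image_le_of_nonneg_endpoints (hr : 0 < r)
    (hφ : ∀ u ∈ Icc (x - r) (x + r), HasDerivWithinAt φ (φ' u) (Icc (x - r) (x + r)) u)
    (hM : ∀ u ∈ Icc (x - r) (x + r), |φ' u - φ' x| ≤ M)
    (hleft : 0 ≤ φ (x - r)) (hright : 0 ≤ φ (x + r)) :
    ∀ y ∈ Icc (x - r) (x + r), φ y ≤ 2 * φ x + 2 * M * r := by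
  intro y hy
  have hxI : x ∈ Icc (x - r) (x + r) := ⟨by linarith, by linarith⟩
  have hbound := abs_deriv_le_of_nonneg_endpoints hr hφ hM hleft hright
  have hC : 0 ≤ φ x / r + 2 * M := (abs_nonneg _).trans (hbound x hxI)
  have hmvt := (convex_Icc _ _).norm_image_sub_le_of_norm_hasDerivWithin_le hφ hbound hxI hy
  simp only [Real.norm_eq_abs] at hmvt
  have hyx : |y - x| ≤ r := abs_sub_le_iff.2 ⟨by linarith [hy.2], by linarith [hy.1]⟩
  calc φ y ≤ φ x + (φ x / r + 2 * M) * r :=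
        by nlinarith [le_abs_self (φ y - φ x), mul_le_mul_of_nonneg_left hyx hC]
    _ = 2 * φ x + 2 * M * r := by field_simp; ring

end NonnegOnInterval

theorem mem_Icc_and_mul_eq_of_leftInverse {ω Ω : ℝ → ℝ} {ε t : ℝ} (hε : 0 ≤ ε)
    (hω : ContinuousOn ω (Icc 0 ε)) (hΩ : ∀ x ∈ Icc 0 ε, Ω (x * ω x) = x)
    (ht : t ∈ Icc 0 (ε * ω ε)) : Ω t ∈ Icc 0 ε ∧ Ω t * ω (Ω t) = t := by
  have hcont : ContinuousOn (fun a => a * ω a) (Icc 0 ε) := continuousOn_id.mul hω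
  obtain ⟨a, ha, rfl⟩ := intermediate_value_Icc hε hcont (by simpa only [zero_mul] using ht)
  rw [hΩ a ha]
  exact ⟨ha, rfl⟩

theorem derivative_and_value_bound_on_Ix_general (ω : ℝ → ℝ) (hω : IsModCont ω)
    (ε : ℝ) (hε0 : 0 < ε) (hε1 : ε ≤ 1)
    (Ω : ℝ → ℝ) (hΩ : ∀ x ∈ Set.Icc 0 ε, Ω (x * ω x) = x)
    (φ : ℝ → ℝ) (hφC1 : ContDiffOn ℝ 1 φ (Set.Icc 0 ε))
    (hφ0 : ∀ u ∈ Set.Icc 0 ε, 0 ≤ φ u)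
    (hφω : ∀ u ∈ Set.Icc 0 ε, ∀ v ∈ Set.Icc 0 ε,
      |derivWithin φ (Set.Icc 0 ε) u - derivWithin φ (Set.Icc 0 ε) v| ≤ ω |u - v|)
    (x : ℝ) (hφx : 0 < φ x) (hφxε : φ x ≤ ε * ω ε)
    (hIx : Set.Icc (x - Ω (φ x)) (x + Ω (φ x)) ⊆ Set.Icc 0 ε) :
    (∀ y ∈ Set.Icc (x - Ω (φ x)) (x + Ω (φ x)),
      |derivWithin φ (Set.Icc 0 ε) y| ≤ 3 * ω (Ω (φ x))) ∧
    3 * ω (Ω (φ x)) = 3 * (φ x / Ω (φ x)) ∧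
    (∀ y ∈ Set.Icc (x - Ω (φ x)) (x + Ω (φ x)), φ y ≤ 4 * φ x) := by
  have hεs : Icc (0:ℝ) ε ⊆ Icc 0 1 := Icc_subset_Icc_right hε1
  obtain ⟨hr, hrω⟩ := mem_Icc_and_mul_eq_of_leftInverse hε0.le (hω.continuousOn.mono hεs) hΩ
    ⟨hφx.le, hφxε⟩
  set r := Ω (φ x)
  have hr_pos : 0 < r := hr.1.lt_of_ne fun h => by
    rw [← h, zero_mul] at hrω
    exact hφx.ne hrω
  have hωr : ω r = φ x / r := by rw [← hrω, mul_div_cancel_left₀ _ hr_pos.ne']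
  have hder : ∀ u ∈ Icc (x - r) (x + r),
      HasDerivWithinAt φ (derivWithin φ (Icc 0 ε) u) (Icc (x - r) (x + r)) u := fun u hu =>
    ((hφC1.differentiableOn one_ne_zero u (hIx hu)).hasDerivWithinAt).mono hIx
  have hosc : ∀ u ∈ Icc (x - r) (x + r),
      |derivWithin φ (Icc 0 ε) u - derivWithin φ (Icc 0 ε) x| ≤ ω r := by
    intro u hu
    have hux : |u - x| ≤ r := abs_sub_le_iff.2 ⟨by linarith [hu.2], by linarith [hu.1]⟩
    exact (hφω u (hIx hu) x (hIx ⟨by linarith, by linarith⟩)).trans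
      (hω.monotoneOn ⟨abs_nonneg _, by linarith [hr.2]⟩ (hεs hr) hux)
  have hleft := hφ0 _ (hIx ⟨le_rfl, by linarith⟩)
  have hright := hφ0 _ (hIx ⟨by linarith, le_rfl⟩)
  refine ⟨fun y hy => ?_, by rw [hωr], fun y hy => ?_⟩
  · calc _ ≤ φ x / r + 2 * ω r :=
          abs_deriv_le_of_nonneg_endpoints hr_pos hder hosc hleft hright y hy
      _ = 3 * ω r := by rw [hωr]; ring
  · calc φ y ≤ 2 * φ x + 2 * ω r * r :=
          image_le_of_nonneg_endpoints hr_pos hder hosc hleft hright y hy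
      _ = 4 * φ x := by rw [mul_assoc 2, mul_comm (ω r), hrω]; ring

/-- **Claim 2.** Let `ω` be a concave modulus of continuity, positive on `(0,1]`, let
`Ω` invert `x ↦ x·ω(x)` on `[0,ε]`, and let `φ` be `C¹` and nonnegative on `[0,ε]` with
`ω`-continuous derivative. If `x ∈ (0,ε)`, `0 < φ(x) ≤ ε·ω(ε)` and
`I_x = [x - Ω(φ(x)), x + Ω(φ(x))] ⊆ [0,ε]`, then
(a) `|φ'(y)| ≤ 3·ω(Ω(φ(x))) = 3·φ(x)/Ω(φ(x))` on `I_x`, and (b) `φ(y) ≤ 4·φ(x)` on `I_x`. -/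
theorem derivative_and_value_bound_on_Ix (ω : ℝ → ℝ) (hω : IsModCont ω)
    (hconc : ConcaveOn ℝ (Set.Icc (0:ℝ) 1) ω)
    (hpos : ∀ x ∈ Set.Ioc (0:ℝ) 1, 0 < ω x)
    (ε : ℝ) (hε0 : 0 < ε) (hε1 : ε ≤ 1) (hωε : ω ε < 1)
    (Ω : ℝ → ℝ) (hΩ : ∀ x ∈ Set.Icc 0 ε, Ω (x * ω x) = x)
    (φ : ℝ → ℝ) (hφC1 : ContDiffOn ℝ 1 φ (Set.Icc 0 ε))
    (hφ0 : ∀ u ∈ Set.Icc 0 ε, 0 ≤ φ u)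
    (hφω : ∀ u ∈ Set.Icc 0 ε, ∀ v ∈ Set.Icc 0 ε,
      |derivWithin φ (Set.Icc 0 ε) u - derivWithin φ (Set.Icc 0 ε) v| ≤ ω |u - v|)
    (x : ℝ) (hx : x ∈ Set.Ioo 0 ε) (hφx : 0 < φ x) (hφxε : φ x ≤ ε * ω ε)
    (hIx : Set.Icc (x - Ω (φ x)) (x + Ω (φ x)) ⊆ Set.Icc 0 ε) :
    (∀ y ∈ Set.Icc (x - Ω (φ x)) (x + Ω (φ x)),
      |derivWithin φ (Set.Icc 0 ε) y| ≤ 3 * ω (Ω (φ x))) ∧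
    3 * ω (Ω (φ x)) = 3 * (φ x / Ω (φ x)) ∧
    (∀ y ∈ Set.Icc (x - Ω (φ x)) (x + Ω (φ x)), φ y ≤ 4 * φ x) :=
  derivative_and_value_bound_on_Ix_general ω hω ε hε0 hε1 Ω hΩ φ hφC1 hφ0 hφω x hφx hφxε hIx
end

section
/- Let ω : [0,1] → [0,∞) be a concave, strictly increasing modulus of continuity, and let f ∈ Diff₀[0,1] satisfy |f'(u) − f'(v)| ≤ ω(|u−v|) for all u,v ∈ [0,1], and f(x) > x for all x in some interval (0, ε). Let φ(x) = f(x) − x and define the orbit x_{k+1} = f(x_k). Then there exist δ ∈ (0, ε) and a constant C(f) > 0 such that: whenever x₁ ∈ (0,δ) and n ≥ 2 is such that x₁, x₂, …, x_n all lie in (0,δ), one has |log (fⁿ)'(x₁) − log( φ(x_n)/φ(x₁) )| ≤ C(f) · n · ω(1/n). -/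
/-!
By the mean value theorem, `φ(x_{k+1}) = f'(θ_k) φ(x_k)` for some `θ_k ∈ (x_k, x_{k+1})`, so
`log (φ(x_n)/φ(x_1)) = ∑_{k<n-1} log f'(θ_k)`, while `log (fⁿ)'(x_1) = ∑_{k<n} log f'(x_k)`.
As `f' ≥ m > 0`, the `k`-th terms differ by at most `ω(x_{k+1} - x_k)/m`, and subadditivity gives
`ω(d) ≤ (n d + 1) ω(1/n)`; the displacements sum to at most `1`, so the sum of these errors is
`O(n ω(1/n))`. The unmatched term `log f'(x_n)` is bounded, and it is absorbed using
`0 < ω(1) ≤ n ω(1/n)`.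
-/

open Set Filter

open Real

namespace IsModCont

variable {ω : ℝ → ℝ}

theorem le_natCast_mul (hω : IsModCont ω) {t : ℝ} (ht : 0 ≤ t) :
    ∀ {k : ℕ}, k * t ≤ 1 → ω (k * t) ≤ k * ω t
  | 0, _ => by simp [hω.map_zero]
  | k + 1, h => by
    push_cast at h ⊢
    calc ω ((k + 1) * t) = ω (k * t + t) := by ring_nf
      _ ≤ ω (k * t) + ω t := hω.subadd _ _ (by positivity) ht (by linarith)
      _ ≤ k * ω t + ω t := by gcongr; exact hω.le_natCast_mul ht (by linarith)
      _ = (k + 1) * ω t := by ring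

theorem nonneg_one_div_natCast (hω : IsModCont ω) (n : ℕ) : 0 ≤ ω (1 / n) :=
  hω.nonneg _ ⟨by positivity, one_div (n : ℝ) ▸ Nat.cast_inv_le_one n⟩

theorem map_one_le_mul_one_div (hω : IsModCont ω) {n : ℕ} (hn : 0 < n) :
    ω 1 ≤ n * ω (1 / n) := by
  have hn' : (n : ℝ) ≠ 0 := by positivity
  simpa [hn'] using hω.le_natCast_mul (t := 1 / n) (by positivity) (k := n) (by simp [hn'])

theorem le_mul_add_one_mul (hω : IsModCont ω) {d : ℝ} (hd : d ∈ Icc (0:ℝ) 1) {n : ℕ}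
    (hn : 0 < n) : ω d ≤ (n * d + 1) * ω (1 / n) := by
  have hn' : (0:ℝ) < n := by exact_mod_cast hn
  set k := ⌈(n:ℝ) * d⌉₊
  have hk : (k:ℝ) * (1 / n) ≤ 1 := by
    rw [mul_one_div, div_le_one hn']
    exact_mod_cast Nat.ceil_le.mpr (by nlinarith [hd.2])
  have hdk : d ≤ k * (1 / n) := by
    rw [mul_one_div, le_div_iff₀ hn', mul_comm]
    exact Nat.le_ceil _
  have := hω.nonneg_one_div_natCast n
  calc ω d ≤ ω (k * (1 / n)) := hω.monotoneOn hd ⟨by positivity, hk⟩ hdk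
    _ ≤ k * ω (1 / n) := hω.le_natCast_mul (by positivity) hk
    _ ≤ (n * d + 1) * ω (1 / n) := by
      gcongr
      exact (Nat.ceil_lt_add_one (by nlinarith [hd.1])).le

theorem sum_le_of_sum_le_one (hω : IsModCont ω) {d : ℕ → ℝ} {N : ℕ}
    (hd : ∀ k ∈ Finset.range N, 0 ≤ d k) (hsum : ∑ k ∈ Finset.range N, d k ≤ 1)
    {n : ℕ} (hn : 0 < n) : ∑ k ∈ Finset.range N, ω (d k) ≤ (n + N) * ω (1 / n) := by
  have := hω.nonneg_one_div_natCast n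
  calc ∑ k ∈ Finset.range N, ω (d k)
      ≤ ∑ k ∈ Finset.range N, (n * d k + 1) * ω (1 / n) :=
        Finset.sum_le_sum fun k hk => hω.le_mul_add_one_mul
          ⟨hd k hk, (Finset.single_le_sum hd hk).trans hsum⟩ hn
    _ = (n * ∑ k ∈ Finset.range N, d k + N) * ω (1 / n) := by
        rw [← Finset.sum_mul, Finset.sum_add_distrib, Finset.mul_sum]
        simp
    _ ≤ (n + N) * ω (1 / n) := by gcongr; nlinarith

theorem pos_of_strictMonoOn (hω : IsModCont ω) (hsm : StrictMonoOn ω (Icc (0:ℝ) 1))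
    {t : ℝ} (ht : t ∈ Ioc (0:ℝ) 1) : 0 < ω t := by
  simpa [hω.map_zero] using hsm (left_mem_Icc.mpr zero_le_one) (Ioc_subset_Icc_self ht) ht.1

end IsModCont

theorem log_sub_log_le_sub_div {a b : ℝ} (ha : 0 < a) (hb : 0 < b) :
    log a - log b ≤ (a - b) / b := by
  rw [← log_div ha.ne' hb.ne', sub_div, div_self hb.ne']
  exact log_le_sub_one_of_pos (div_pos ha hb)

theorem abs_log_sub_log_le_abs_sub_div {a b m : ℝ} (hm : 0 < m) (ha : m ≤ a) (hb : m ≤ b) :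
    |log a - log b| ≤ |a - b| / m := by
  have key : ∀ {x y : ℝ}, m ≤ x → m ≤ y → log x - log y ≤ |x - y| / m := fun {x y} hx hy =>
    calc log x - log y ≤ (x - y) / y := log_sub_log_le_sub_div (hm.trans_le hx) (hm.trans_le hy)
      _ ≤ |x - y| / y := div_le_div_of_nonneg_right (le_abs_self _) (hm.trans_le hy).le
      _ ≤ |x - y| / m := div_le_div_of_nonneg_left (abs_nonneg _) hm hy
  exact abs_sub_le_iff.mpr ⟨key ha hb, abs_sub_comm a b ▸ key hb ha⟩

theorem hasDerivWithinAt_iterate_prod {f : ℝ → ℝ} {s : Set ℝ} (hmaps : MapsTo f s s)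
    (hdiff : DifferentiableOn ℝ f s) {x : ℝ} (hx : x ∈ s) (n : ℕ) :
    HasDerivWithinAt (f^[n]) (∏ k ∈ Finset.range n, derivWithin f s (f^[k] x)) s x := by
  induction n with
  | zero => simpa using hasDerivWithinAt_id x s
  | succ k ih =>
    rw [Function.iterate_succ', Finset.prod_range_succ, mul_comm]
    exact (hdiff _ (hmaps.iterate k hx)).hasDerivWithinAt.comp x ih (hmaps.iterate k)

theorem exists_mem_Ioo_sub_eq_derivWithin_mul {f : ℝ → ℝ} {p q a b : ℝ}
    (hdiff : DifferentiableOn ℝ f (Icc p q)) (ha : p ≤ a) (hab : a < b) (hb : b ≤ q) :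
    ∃ c ∈ Ioo a b, f b - f a = derivWithin f (Icc p q) c * (b - a) := by
  have hsub : Icc a b ⊆ Icc p q := Icc_subset_Icc ha hb
  have hnhds : ∀ c ∈ Ioo a b, Icc p q ∈ nhds c := fun c hc =>
    Icc_mem_nhds (ha.trans_lt hc.1) (hc.2.trans_le hb)
  obtain ⟨c, hc, hslope⟩ := exists_deriv_eq_slope f hab (hdiff.mono hsub).continuousOn
    fun c hc => ((hdiff c (hsub (Ioo_subset_Icc_self hc))).differentiableAt
      (hnhds c hc)).differentiableWithinAt
  refine ⟨c, hc, ?_⟩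
  rw [derivWithin_of_mem_nhds (hnhds c hc), hslope, div_mul_cancel₀ _ (sub_pos.mpr hab).ne']

namespace IsDiff01

variable {f g : ℝ → ℝ}

theorem differentiableOn (hf : IsDiff01 f g) : DifferentiableOn ℝ f (Icc (0:ℝ) 1) :=
  hf.contDiffOn.differentiableOn one_ne_zero

theorem continuousOn_derivWithin (hf : IsDiff01 f g) :
    ContinuousOn (derivWithin f (Icc (0:ℝ) 1)) (Icc (0:ℝ) 1) :=
  hf.contDiffOn.continuousOn_derivWithin (uniqueDiffOn_Icc one_pos) le_rfl

theorem exists_pos_le_derivWithin (hf : IsDiff01 f g) :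
    ∃ m > 0, ∀ y ∈ Icc (0:ℝ) 1, m ≤ derivWithin f (Icc (0:ℝ) 1) y := by
  obtain ⟨y₀, hy₀, hmin⟩ := isCompact_Icc.exists_isMinOn (nonempty_Icc.mpr zero_le_one)
    hf.continuousOn_derivWithin
  exact ⟨_, hf.deriv_pos y₀ hy₀, fun y hy => hmin hy⟩

theorem exists_abs_log_derivWithin_le (hf : IsDiff01 f g) :
    ∃ K ≥ 0, ∀ y ∈ Icc (0:ℝ) 1, |log (derivWithin f (Icc (0:ℝ) 1) y)| ≤ K := by
  obtain ⟨K, hK⟩ := isCompact_Icc.exists_bound_of_continuousOn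
    (hf.continuousOn_derivWithin.log fun y hy => (hf.deriv_pos y hy).ne')
  exact ⟨K, (norm_nonneg _).trans (hK 0 (left_mem_Icc.mpr zero_le_one)), hK⟩

theorem log_derivWithin_iterate (hf : IsDiff01 f g) {x : ℝ} (hx : x ∈ Icc (0:ℝ) 1) (n : ℕ) :
    log (derivWithin (f^[n]) (Icc (0:ℝ) 1) x) =
      ∑ k ∈ Finset.range n, log (derivWithin f (Icc (0:ℝ) 1) (f^[k] x)) := by
  rw [((hasDerivWithinAt_iterate_prod hf.mapsTo hf.differentiableOn hx n).derivWithin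
    (uniqueDiffOn_Icc one_pos x hx)), log_prod]
  exact fun k _ => (hf.deriv_pos _ (hf.mapsTo.iterate k hx)).ne'

theorem abs_log_derivWithin_sub_log_displacement_ratio_le (hf : IsDiff01 f g) {ω : ℝ → ℝ}
    (hω : IsModCont ω)
    (hfω : ∀ u ∈ Icc (0:ℝ) 1, ∀ v ∈ Icc (0:ℝ) 1,
      |derivWithin f (Icc (0:ℝ) 1) u - derivWithin f (Icc (0:ℝ) 1) v| ≤ ω |u - v|)
    {m : ℝ} (hm : 0 < m) (hmf : ∀ y ∈ Icc (0:ℝ) 1, m ≤ derivWithin f (Icc (0:ℝ) 1) y)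
    {y : ℝ} (hy : y ∈ Icc (0:ℝ) 1) (hyf : y < f y) :
    |log (derivWithin f (Icc (0:ℝ) 1) y) - log ((f (f y) - f y) / (f y - y))| ≤
      ω (f y - y) / m := by
  have hfy : f y ∈ Icc (0:ℝ) 1 := hf.mapsTo hy
  obtain ⟨θ, hθ, hφ⟩ := exists_mem_Ioo_sub_eq_derivWithin_mul hf.differentiableOn hy.1 hyf hfy.2
  have hθI : θ ∈ Icc (0:ℝ) 1 := ⟨hy.1.trans hθ.1.le, hθ.2.le.trans hfy.2⟩
  have hdist : |y - θ| ≤ f y - y := by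
    rw [abs_sub_comm, abs_of_pos (sub_pos.mpr hθ.1)]
    linarith [hθ.2]
  rw [hφ, mul_div_cancel_right₀ _ (sub_pos.mpr hyf).ne']
  calc _ ≤ |derivWithin f (Icc 0 1) y - derivWithin f (Icc 0 1) θ| / m :=
        abs_log_sub_log_le_abs_sub_div hm (hmf y hy) (hmf θ hθI)
    _ ≤ ω |y - θ| / m := by gcongr; exact hfω y hy θ hθI
    _ ≤ ω (f y - y) / m := by
        have hφI : f y - y ∈ Icc (0:ℝ) 1 := ⟨by linarith, by linarith [hfy.2, hy.1]⟩
        gcongr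
        exact hω.monotoneOn ⟨abs_nonneg _, hdist.trans hφI.2⟩ hφI hdist

theorem abs_log_derivWithin_iterate_sub_log_displacement_ratio_le (hf : IsDiff01 f g)
    {ω : ℝ → ℝ} (hω : IsModCont ω)
    (hfω : ∀ u ∈ Icc (0:ℝ) 1, ∀ v ∈ Icc (0:ℝ) 1,
      |derivWithin f (Icc (0:ℝ) 1) u - derivWithin f (Icc (0:ℝ) 1) v| ≤ ω |u - v|)
    {m : ℝ} (hm : 0 < m) (hmf : ∀ y ∈ Icc (0:ℝ) 1, m ≤ derivWithin f (Icc (0:ℝ) 1) y)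
    {K : ℝ} (hK : ∀ y ∈ Icc (0:ℝ) 1, |log (derivWithin f (Icc (0:ℝ) 1) y)| ≤ K)
    {x : ℝ} (hx : x ∈ Icc (0:ℝ) 1) {N : ℕ} (hinc : ∀ k ≤ N, f^[k] x < f (f^[k] x)) :
    |log (derivWithin (f^[N + 1]) (Icc (0:ℝ) 1) x) -
        log ((f (f^[N] x) - f^[N] x) / (f x - x))| ≤
      (∑ k ∈ Finset.range N, ω (f (f^[k] x) - f^[k] x)) / m + K := by
  set φ : ℕ → ℝ := fun k => f (f^[k] x) - f^[k] x with hφ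
  have hφpos : ∀ k ≤ N, 0 < φ k := fun k hk => sub_pos.mpr (hinc k hk)
  have hratio : log (φ N / φ 0) = ∑ k ∈ Finset.range N, log (φ (k + 1) / φ k) := by
    rw [log_div (hφpos N le_rfl).ne' (hφpos 0 N.zero_le).ne',
      ← Finset.sum_range_sub (fun k => log (φ k))]
    refine Finset.sum_congr rfl fun k hk => ?_
    have hk := Finset.mem_range.mp hk
    rw [log_div (hφpos _ hk).ne' (hφpos _ hk.le).ne']
  have hstep : ∀ k ∈ Finset.range N, |log (derivWithin f (Icc 0 1) (f^[k] x)) -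
      log (φ (k + 1) / φ k)| ≤ ω (φ k) / m := by
    intro k hk
    simp only [hφ, Function.iterate_succ_apply']
    exact hf.abs_log_derivWithin_sub_log_displacement_ratio_le hω hfω hm hmf
      (hf.mapsTo.iterate k hx) (hinc k (Finset.mem_range.mp hk).le)
  change |_ - log (φ N / φ 0)| ≤ _
  rw [hratio, hf.log_derivWithin_iterate hx, Finset.sum_range_succ, Finset.sum_div]
  calc _ = |∑ k ∈ Finset.range N, (log (derivWithin f (Icc 0 1) (f^[k] x)) -
          log (φ (k + 1) / φ k)) + log (derivWithin f (Icc 0 1) (f^[N] x))| := by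
        rw [Finset.sum_sub_distrib]; ring_nf
    _ ≤ ∑ k ∈ Finset.range N, |log (derivWithin f (Icc 0 1) (f^[k] x)) -
          log (φ (k + 1) / φ k)| + |log (derivWithin f (Icc 0 1) (f^[N] x))| :=
        (abs_add_le _ _).trans (by gcongr; exact Finset.abs_sum_le_sum_abs _ _)
    _ ≤ _ := add_le_add (Finset.sum_le_sum hstep) (hK _ (hf.mapsTo.iterate N hx))

end IsDiff01

theorem log_deriv_iterate_approx_general (ω : ℝ → ℝ) (hω : IsModCont ω)
    (hsm : StrictMonoOn ω (Set.Icc (0:ℝ) 1))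
    (f g : ℝ → ℝ) (hf : IsDiff01 f g)
    (hfω : ∀ u ∈ Set.Icc (0:ℝ) 1, ∀ v ∈ Set.Icc (0:ℝ) 1,
      |derivWithin f (Set.Icc (0:ℝ) 1) u - derivWithin f (Set.Icc (0:ℝ) 1) v| ≤ ω |u - v|)
    (ε : ℝ) (hε0 : 0 < ε)
    (hfx : ∀ x ∈ Set.Ioo 0 ε, x < f x) :
    ∃ δ : ℝ, 0 < δ ∧ δ < ε ∧ ∃ C > 0,
      ∀ x₁ ∈ Set.Ioo 0 δ, ∀ n : ℕ, 2 ≤ n →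
        (∀ k < n, f^[k] x₁ ∈ Set.Ioo 0 δ) →
        |Real.log (derivWithin (f^[n]) (Set.Icc (0:ℝ) 1) x₁) -
            Real.log ((f (f^[n-1] x₁) - f^[n-1] x₁) / (f x₁ - x₁))|
          ≤ C * n * ω (1 / (n:ℝ)) := by
  obtain ⟨m, hm, hmf⟩ := hf.exists_pos_le_derivWithin
  obtain ⟨K, hK0, hK⟩ := hf.exists_abs_log_derivWithin_le
  have hω1 : 0 < ω 1 := hω.pos_of_strictMonoOn hsm ⟨one_pos, le_rfl⟩
  have hδε : min ε 1 / 2 < ε := by linarith [min_le_left ε 1]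
  have hδ1 : min ε 1 / 2 < 1 := by linarith [min_le_right ε 1]
  refine ⟨min ε 1 / 2, by positivity, hδε, 2 / m + K / ω 1, by positivity, ?_⟩
  intro x hx n hn horb
  obtain ⟨N, rfl⟩ : ∃ N, n = N + 1 := ⟨n - 1, by omega⟩
  have hinc : ∀ k ≤ N, f^[k] x < f (f^[k] x) := fun k hk =>
    hfx _ ⟨(horb k (by omega)).1, (horb k (by omega)).2.trans hδε⟩
  have hdisp_sum : ∑ k ∈ Finset.range N, (f (f^[k] x) - f^[k] x) ≤ 1 := by
    have := Finset.sum_range_sub (fun k => f^[k] x) N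
    simp only [Function.iterate_succ_apply', Function.iterate_zero_apply] at this
    linarith [(horb N (by omega)).2, hx.1]
  have hω_sum := hω.sum_le_of_sum_le_one (fun k hk => (sub_pos.mpr (hinc k
    (Finset.mem_range.mp hk).le)).le) hdisp_sum N.succ_pos
  have hnω := hω.map_one_le_mul_one_div (n := N + 1) N.succ_pos
  have hw := hω.nonneg_one_div_natCast (N + 1)
  rw [Nat.add_sub_cancel]
  calc _ ≤ (∑ k ∈ Finset.range N, ω (f (f^[k] x) - f^[k] x)) / m + K :=
        hf.abs_log_derivWithin_iterate_sub_log_displacement_ratio_le hω hfω hm hmf hK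
          ⟨hx.1.le, hx.2.le.trans hδ1.le⟩ hinc
    _ ≤ 2 * (N + 1 : ℕ) * ω (1 / (N + 1 : ℕ)) / m +
          K / ω 1 * ((N + 1 : ℕ) * ω (1 / (N + 1 : ℕ))) := by
        gcongr
        · push_cast at hω_sum hw ⊢; nlinarith
        · rw [div_mul_eq_mul_div, le_div_iff₀ hω1]; exact mul_le_mul_of_nonneg_left hnω hK0
    _ = (2 / m + K / ω 1) * (N + 1 : ℕ) * ω (1 / (N + 1 : ℕ)) := by ring

/-- **Lemma 2.** Let `ω` be a concave strictly increasing modulus of continuity and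
`f ∈ Diff₀[0,1]` with `|f'(u) - f'(v)| ≤ ω(|u-v|)` and `f(x) > x` on `(0,ε)`. Then there are
`δ ∈ (0,ε)` and `C(f) > 0` such that whenever the orbit points `x₁, …, x_n` all lie in
`(0,δ)` (with `n ≥ 2`), `|log (fⁿ)'(x₁) - log (φ(x_n)/φ(x₁))| ≤ C(f) · n · ω(1/n)`. -/
theorem log_deriv_iterate_approx (ω : ℝ → ℝ) (hω : IsModCont ω)
    (hconc : ConcaveOn ℝ (Set.Icc (0:ℝ) 1) ω)
    (hsm : StrictMonoOn ω (Set.Icc (0:ℝ) 1))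
    (f g : ℝ → ℝ) (hf : IsDiff01 f g)
    (hfω : ∀ u ∈ Set.Icc (0:ℝ) 1, ∀ v ∈ Set.Icc (0:ℝ) 1,
      |derivWithin f (Set.Icc (0:ℝ) 1) u - derivWithin f (Set.Icc (0:ℝ) 1) v| ≤ ω |u - v|)
    (ε : ℝ) (hε0 : 0 < ε) (hε1 : ε ≤ 1)
    (hfx : ∀ x ∈ Set.Ioo 0 ε, x < f x) :
    ∃ δ : ℝ, 0 < δ ∧ δ < ε ∧ ∃ C > 0,
      ∀ x₁ ∈ Set.Ioo 0 δ, ∀ n : ℕ, 2 ≤ n →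
        (∀ k < n, f^[k] x₁ ∈ Set.Ioo 0 δ) →
        |Real.log (derivWithin (f^[n]) (Set.Icc (0:ℝ) 1) x₁) -
            Real.log ((f (f^[n-1] x₁) - f^[n-1] x₁) / (f x₁ - x₁))|
          ≤ C * n * ω (1 / (n:ℝ)) :=
  log_deriv_iterate_approx_general ω hω hsm f g hf hfω ε hε0 hfx
end

section
/- Let ω : [0,1] → [0,∞) be a modulus of continuity and set φ₀(x) = ∫₀^x ω(t) dt for x ∈ [0,1]. Let b ∈ (0,1] and let φ : [0,b] → ℝ be a C¹ function with φ(0) = 0, φ ≥ 0 on [0,b], and |φ'(u) − φ'(v)| ≤ ω(|u−v|) for all u,v ∈ [0,b], and with |φ'(t)| ≤ ω(t) for all t ∈ [0,b]. If s ∈ (0,b] and s₀ ∈ (0,b] satisfy φ(s) = φ₀(s₀), then φ'(s) ≤ 2·ω(s₀). -/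
open Set Filter

open MeasureTheory

/-! If `s₀ ≥ s`, then `φ'(s) ≤ ω(s) ≤ ω(s₀)`. Otherwise the modulus bound gives
`φ'(u) ≥ φ'(s) - ω(s - u)` on `[s - s₀, s]`; integrating, and using `φ(s - s₀) ≥ 0`,
`s₀ φ'(s) - φ₀(s₀) ≤ φ(s) = φ₀(s₀)`, while monotonicity of `ω` gives `φ₀(s₀) ≤ s₀ ω(s₀)`. -/

theorem MonotoneOn.intervalIntegral_le_mul {f : ℝ → ℝ} {a b : ℝ}
    (hf : MonotoneOn f (Icc a b)) (hab : a ≤ b) :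
    ∫ x in a..b, f x ≤ (b - a) * f b := by
  have hint : IntervalIntegrable f volume a b := by
    rw [← uIcc_of_le hab] at hf
    exact hf.intervalIntegrable
  calc ∫ x in a..b, f x ≤ ∫ _ in a..b, f b :=
        intervalIntegral.integral_mono_on hab hint intervalIntegrable_const
          fun x hx => hf hx (right_mem_Icc.2 hab) hx.2
    _ = (b - a) * f b := by rw [intervalIntegral.integral_const, smul_eq_mul]

theorem integral_le_sub_of_le_derivWithin {f g : ℝ → ℝ} {a b c d : ℝ}
    (hf : DifferentiableOn ℝ f (Icc a b)) (hac : a ≤ c) (hcd : c ≤ d) (hdb : d ≤ b)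
    (hg : IntegrableOn g (Icc c d)) (hgf : ∀ x ∈ Ioo c d, g x ≤ derivWithin f (Icc a b) x) :
    ∫ x in c..d, g x ≤ f d - f c := by
  have hsub : Icc c d ⊆ Icc a b := Icc_subset_Icc hac hdb
  refine intervalIntegral.integral_le_sub_of_hasDeriv_right_of_le hcd (hf.continuousOn.mono hsub)
    (fun x hx => ?_) hg hgf
  have hnhds : Icc a b ∈ nhds x := Icc_mem_nhds (hac.trans_lt hx.1) (hx.2.trans_le hdb)
  rw [derivWithin_of_mem_nhds hnhds]
  exact ((hf x (hsub (Ioo_subset_Icc_self hx))).differentiableAt hnhds).hasDerivAt.hasDerivWithinAt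

theorem mul_derivWithin_sub_integral_le {f ω : ℝ → ℝ} {a b s h : ℝ}
    (hf : DifferentiableOn ℝ f (Icc a b)) (hω : IntervalIntegrable ω volume 0 h)
    (has : a ≤ s - h) (hh : 0 ≤ h) (hsb : s ≤ b)
    (hD : ∀ u ∈ Ioo (s - h) s, derivWithin f (Icc a b) s - derivWithin f (Icc a b) u ≤ ω (s - u)) :
    h * derivWithin f (Icc a b) s - ∫ t in 0..h, ω t ≤ f s - f (s - h) := by
  set D := derivWithin f (Icc a b)
  have hωs : IntervalIntegrable (fun u => ω (s - u)) volume (s - h) s := by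
    simpa using (hω.comp_sub_left s).symm
  have hlower : ∫ u in (s - h)..s, (D s - ω (s - u)) = h * D s - ∫ t in 0..h, ω t := by
    rw [intervalIntegral.integral_sub intervalIntegrable_const hωs,
      intervalIntegral.integral_const, intervalIntegral.integral_comp_sub_left (fun t => ω t) s]
    simp
  rw [← hlower]
  refine integral_le_sub_of_le_derivWithin hf has (by linarith) hsb ?_ fun u hu => ?_
  · exact (intervalIntegrable_iff_integrableOn_Icc_of_le (by linarith)).1
      (intervalIntegrable_const.sub hωs)
  · linarith [hD u hu]

theorem deriv_comparison_model_general (ω : ℝ → ℝ) (hω : IsModCont ω)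
    (φ₀ : ℝ → ℝ) (hφ₀ : ∀ x, φ₀ x = ∫ t in (0:ℝ)..x, ω t)
    (b : ℝ) (hb1 : b ≤ 1)
    (φ : ℝ → ℝ) (hφC1 : ContDiffOn ℝ 1 φ (Set.Icc 0 b))
    (hφ0 : ∀ u ∈ Set.Icc 0 b, 0 ≤ φ u)
    (hφω : ∀ u ∈ Set.Icc 0 b, ∀ v ∈ Set.Icc 0 b,
      |derivWithin φ (Set.Icc 0 b) u - derivWithin φ (Set.Icc 0 b) v| ≤ ω |u - v|)
    (hφ' : ∀ t ∈ Set.Icc 0 b, |derivWithin φ (Set.Icc 0 b) t| ≤ ω t)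
    (s s₀ : ℝ) (hs : s ∈ Set.Ioc 0 b) (hs₀ : s₀ ∈ Set.Ioc 0 b)
    (heq : φ s = φ₀ s₀) :
    derivWithin φ (Set.Icc 0 b) s ≤ 2 * ω s₀ := by
  obtain ⟨hs0, hsb⟩ := hs
  obtain ⟨hs₀0, hs₀b⟩ := hs₀
  set D := derivWithin φ (Set.Icc 0 b)
  have hs₀1 : s₀ ∈ Icc (0 : ℝ) 1 := ⟨hs₀0.le, hs₀b.trans hb1⟩
  have hωmono : MonotoneOn ω (Icc 0 s₀) := hω.monotoneOn.mono (Icc_subset_Icc_right hs₀1.2)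
  rcases le_or_gt s s₀ with hle | hlt
  · calc D s ≤ |D s| := le_abs_self _
      _ ≤ ω s := hφ' s ⟨hs0.le, hsb⟩
      _ ≤ ω s₀ := hω.monotoneOn ⟨hs0.le, hle.trans hs₀1.2⟩ hs₀1 hle
      _ ≤ 2 * ω s₀ := by linarith [hω.nonneg s₀ hs₀1]
  have hD : ∀ u ∈ Ioo (s - s₀) s, D s - D u ≤ ω (s - u) := fun u hu => by
    have h := hφω s ⟨hs0.le, hsb⟩ u ⟨by linarith [hu.1], by linarith [hu.2]⟩
    rw [abs_of_pos (sub_pos.2 hu.2)] at h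
    exact (le_abs_self _).trans h
  have hinc := mul_derivWithin_sub_integral_le (hφC1.differentiableOn one_ne_zero)
    ((uIcc_of_le hs₀0.le ▸ hωmono).intervalIntegrable) (by linarith) hs₀0.le hsb hD
  have hφ₀le : φ₀ s₀ ≤ s₀ * ω s₀ := by
    simpa [hφ₀] using hωmono.intervalIntegral_le_mul hs₀0.le
  have hφpos : 0 ≤ φ (s - s₀) := hφ0 _ ⟨by linarith, by linarith⟩
  rw [← hφ₀] at hinc
  have key : s₀ * D s ≤ s₀ * (2 * ω s₀) := by linarith
  exact le_of_mul_le_mul_left key hs₀0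

/-- **Claim 6.** Let `φ₀(x) = ∫₀^x ω(t) dt` and let `φ` be a `C¹` function on `[0,b]` with
`φ(0) = 0`, `φ ≥ 0`, `ω`-continuous derivative and `|φ'(t)| ≤ ω(t)`. If `φ(s) = φ₀(s₀)`
for `s, s₀ ∈ (0,b]`, then `φ'(s) ≤ 2·ω(s₀)`. -/
theorem deriv_comparison_model (ω : ℝ → ℝ) (hω : IsModCont ω)
    (φ₀ : ℝ → ℝ) (hφ₀ : ∀ x, φ₀ x = ∫ t in (0:ℝ)..x, ω t)
    (b : ℝ) (hb0 : 0 < b) (hb1 : b ≤ 1)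
    (φ : ℝ → ℝ) (hφC1 : ContDiffOn ℝ 1 φ (Set.Icc 0 b))
    (hφzero : φ 0 = 0)
    (hφ0 : ∀ u ∈ Set.Icc 0 b, 0 ≤ φ u)
    (hφω : ∀ u ∈ Set.Icc 0 b, ∀ v ∈ Set.Icc 0 b,
      |derivWithin φ (Set.Icc 0 b) u - derivWithin φ (Set.Icc 0 b) v| ≤ ω |u - v|)
    (hφ' : ∀ t ∈ Set.Icc 0 b, |derivWithin φ (Set.Icc 0 b) t| ≤ ω t)
    (s s₀ : ℝ) (hs : s ∈ Set.Ioc 0 b) (hs₀ : s₀ ∈ Set.Ioc 0 b)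
    (heq : φ s = φ₀ s₀) :
    derivWithin φ (Set.Icc 0 b) s ≤ 2 * ω s₀ :=
  deriv_comparison_model_general ω hω φ₀ hφ₀ b hb1 φ hφC1 hφ0 hφω hφ' s s₀ hs hs₀ heq
end
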